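/- Let n ≥ 1, λ > 0, and let Ω ⊂ ℝⁿ be an open bounded convex set. Let u be a convex function on Ω whose Monge–Ampère measure satisfies Mu(A) ≥ λ·|A| for every Borel A ⊆ Ω. Then there exists C > 0 depending only on λ and n such that every section of u satisfies |S_h(x)| ≤ C h^{n/2}, for all x ∈ Ω, all subgradients p ∈ ∂u(x), and all h > 0. -/

import Mathlib

open MeasureTheory Metric Set
open scoped RealInnerProductSpace ENNReal Topology Asymptotics Pointwise

noncomputable section

/-- Euclidean space `ℝⁿ`. -/
abbrev E (n : ℕ) : Type := EuclideanSpace ℝ (Fin n)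

/-- The subdifferential of `u` at `x`, relative to the domain `Ω`. -/
def subdiff {n : ℕ} (Ω : Set (E n)) (u : E n → ℝ) (x : E n) : Set (E n) :=
  {p | ∀ y ∈ Ω, u x + ⟪p, y - x⟫ ≤ u y}

/-- The Monge–Ampère measure of `u` (relative to the domain `Ω`) of a set `A`. -/
def MAm {n : ℕ} (Ω : Set (E n)) (u : E n → ℝ) (A : Set (E n)) : ℝ≥0∞ :=
  volume (⋃ x ∈ A, subdiff Ω u x)

/-- The section `S_h(x)` of `u` at `x`, with subgradient `p` and height `h`. -/
def secn {n : ℕ} (Ω : Set (E n)) (u : E n → ℝ) (x p : E n) (h : ℝ) : Set (E n) :=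
  {y ∈ Ω | u y < u x + ⟪p, y - x⟫ + h}

/-- `u` is an Alexandrov solution of `lam ≤ det D²u ≤ Lam` in `Ω`. -/
def AlexSol {n : ℕ} (Ω : Set (E n)) (u : E n → ℝ) (lam Lam : ℝ) : Prop :=
  ∀ A : Set (E n), MeasurableSet A → A ⊆ Ω →
    ENNReal.ofReal lam * volume A ≤ MAm Ω u A ∧ MAm Ω u A ≤ ENNReal.ofReal Lam * volume A

/-- The class `D_{n,λ,Λ,K}`. -/
def memD {n : ℕ} (lam Lam K : ℝ) (u : E n → ℝ) : Prop :=
  ConvexOn ℝ (ball (0 : E n) 1) u ∧ AlexSol (ball (0 : E n) 1) u lam Lam ∧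
    ∀ x ∈ ball (0 : E n) 1, |u x| ≤ K

/-- `h̄(x)`: the supremum of heights `h` such that some section of `u` at `x` of height `h`
is compactly contained in the unit ball. -/
def hbar {n : ℕ} (u : E n → ℝ) (x : E n) : ℝ :=
  sSup ({0} ∪ {h : ℝ | 0 < h ∧ ∃ p ∈ subdiff (ball (0 : E n) 1) u x,
    closure (secn (ball (0 : E n) 1) u x p h) ⊆ ball (0 : E n) 1})

/-- `(p, H)` is an a.e. Hessian of `u` on `U`. -/
def IsAEHessian {n : ℕ} (U : Set (E n)) (u : E n → ℝ) (p : E n → E n)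
    (H : E n → Matrix (Fin n) (Fin n) ℝ) : Prop :=
  Measurable p ∧ (∀ i j, Measurable fun x => H x i j) ∧ (∀ x, (H x).PosSemidef) ∧
  ∀ᵐ x ∂(volume.restrict U),
    (fun y => u y - u x - ⟪p x, y - x⟫
        - (1/2) * ∑ i, ∑ j, H x i j * (y - x) i * (y - x) j)
      =o[nhds x] fun y => ‖y - x‖ ^ 2

/-!
Let `C` be the closure of the section `S`. Choose `v₁, …, vₙ ∈ C - C` maximising `|det v|`.
By Cramer's rule `C - C` lies in the parallelepiped `{∑ tⱼ vⱼ : |tⱼ| ≤ 1}`, so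
`|S| ≤ 2ⁿ |det v|`, and averaging the endpoints of the `vⱼ` gives `y ∈ C` with `y ± vᵢ / 2n ∈ C`.
On the half-size copy `S'` of `S` centred at `y`, every `q ∈ ∂u(y')` satisfies
`|⟪vᵢ, q - p⟫| ≤ 4nh`, because `u` stays below `u x + ⟪p, · - x⟫ + h` on `S`. So `∂u(S')` lies in
a slab of volume `(8nh)ⁿ / |det v|`. Hence `λ 2⁻ⁿ |S| ≤ Mu(S') ≤ (8nh)ⁿ / |det v| ≤ (16nh)ⁿ / |S|`,
that is `|S|² ≤ (32nh)ⁿ / λ`.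
-/

open Matrix

section Center

variable {V : Type*} [AddCommGroup V] [Module ℝ V] {ι : Type*} [Fintype ι]

theorem Convex.inv_card_smul_sum_mem [Nonempty ι] {C : Set V} (hC : Convex ℝ C) {c : ι → V}
    (hc : ∀ i, c i ∈ C) : (Fintype.card ι : ℝ)⁻¹ • ∑ i, c i ∈ C := by
  rw [Finset.smul_sum]
  refine hC.sum_mem (fun _ _ => by positivity) ?_ fun i _ => hc i
  simp

theorem inv_card_smul_sum_update [DecidableEq ι] (c : ι → V) (i : ι) (a : V) :
    (Fintype.card ι : ℝ)⁻¹ • ∑ j, Function.update c i a j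
      = (Fintype.card ι : ℝ)⁻¹ • ∑ j, c j + (Fintype.card ι : ℝ)⁻¹ • (a - c i) := by
  rw [← smul_add, Finset.sum_update_of_mem (Finset.mem_univ i),
    ← Finset.add_sum_erase _ _ (Finset.mem_univ i), Finset.sdiff_singleton_eq_erase]
  abel_nf

theorem Convex.exists_add_smul_mem_and_sub_smul_mem [Nonempty ι] {C : Set V}
    (hC : Convex ℝ C) {v : ι → V} (hv : ∀ i, v i ∈ C - C) :
    ∃ y ∈ C, ∀ i, y + (2 * Fintype.card ι : ℝ)⁻¹ • v i ∈ C ∧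
      y - (2 * Fintype.card ι : ℝ)⁻¹ • v i ∈ C := by
  classical
  choose z hz w hw hzw using hv
  -- `y` is the average of the midpoints `c j` of `w j, z j`; replacing `c i` by `z i` or `w i`
  -- moves the average by `±(2 #ι)⁻¹ v i`.
  set c : ι → V := fun j => (2 : ℝ)⁻¹ • z j + (2 : ℝ)⁻¹ • w j
  have hc : ∀ j, c j ∈ C := fun j => hC (hz j) (hw j) (by norm_num) (by norm_num) (by norm_num)
  have hmem : ∀ i a, a ∈ C → (Fintype.card ι : ℝ)⁻¹ • ∑ j, c j
      + (Fintype.card ι : ℝ)⁻¹ • (a - c i) ∈ C := fun i a ha => by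
    rw [← inv_card_smul_sum_update]
    refine hC.inv_card_smul_sum_mem fun j => ?_
    rcases eq_or_ne j i with rfl | hj
    · simpa using ha
    · simpa [hj] using hc j
  refine ⟨_, hC.inv_card_smul_sum_mem hc, fun i => ⟨?_, ?_⟩⟩
  · convert hmem i (z i) (hz i) using 2
    simp only [c, ← hzw]
    module
  · convert hmem i (w i) (hw i) using 2
    simp only [c, ← hzw]
    module

end Center

section Frame

variable {ι : Type*} [Fintype ι] [DecidableEq ι]

def colMatrix (v : ι → EuclideanSpace ℝ ι) : Matrix ι ι ℝ := Matrix.of fun i j => v j i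

omit [DecidableEq ι] in
theorem EuclideanSpace.volume_setOf_forall_abs_le {c : ℝ} (hc : 0 ≤ c) :
    volume {w : EuclideanSpace ℝ ι | ∀ i, |w i| ≤ c}
      = ENNReal.ofReal ((2 * c) ^ Fintype.card ι) := by
  have hcube : {w : EuclideanSpace ℝ ι | ∀ i, |w i| ≤ c}
      = (MeasurableEquiv.toLp 2 (ι → ℝ)).symm ⁻¹' univ.pi fun _ => Icc (-c) c := by
    ext w
    simp [abs_le, Pi.le_def, forall_and]
  rw [hcube, (EuclideanSpace.volume_preserving_symm_measurableEquiv_toLp ι).measure_preimage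
      (MeasurableSet.univ_pi fun _ => measurableSet_Icc).nullMeasurableSet, volume_pi_pi]
  simp [Real.volume_Icc, ← two_mul, ENNReal.ofReal_pow (by positivity : (0 : ℝ) ≤ 2 * c)]

theorem volume_image_colMatrix_cube (v : ι → EuclideanSpace ℝ ι) {c : ℝ} (hc : 0 ≤ c) :
    volume (toLpLin 2 2 (colMatrix v) '' {w | ∀ i, |w i| ≤ c})
      = ENNReal.ofReal (|(colMatrix v).det| * (2 * c) ^ Fintype.card ι) := by
  rw [Measure.addHaar_image_linearMap, LinearMap.det_toLpLin,
    EuclideanSpace.volume_setOf_forall_abs_le hc, ← ENNReal.ofReal_mul (abs_nonneg _)]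

theorem volume_setOf_forall_abs_inner_sub_le {v : ι → EuclideanSpace ℝ ι}
    (hv : (colMatrix v).det ≠ 0) (p : EuclideanSpace ℝ ι) {c : ℝ} (hc : 0 ≤ c) :
    volume {w | ∀ i, |⟪v i, w - p⟫| ≤ c}
      = ENNReal.ofReal ((2 * c) ^ Fintype.card ι / |(colMatrix v).det|) := by
  have hdet : LinearMap.det (toLpLin 2 2 (colMatrix v)ᵀ) ≠ 0 := by
    rwa [LinearMap.det_toLpLin, det_transpose]
  have hslab : {w | ∀ i, |⟪v i, w - p⟫| ≤ c}
      = (· + -p) ⁻¹' (toLpLin 2 2 (colMatrix v)ᵀ ⁻¹' {w | ∀ i, |w i| ≤ c}) := by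
    ext w
    simp [toLpLin_apply, mulVec, dotProduct, colMatrix, PiLp.inner_apply, mul_comm, sub_eq_add_neg]
  rw [hslab, measure_preimage_add_right, Measure.addHaar_preimage_linearMap _ hdet,
    LinearMap.det_toLpLin, det_transpose, EuclideanSpace.volume_setOf_forall_abs_le hc,
    ← ENNReal.ofReal_mul (by positivity), abs_inv, inv_mul_eq_div]

theorem subset_image_cube_of_isMaxOn_abs_det {K : Set (EuclideanSpace ℝ ι)}
    {v : ι → EuclideanSpace ℝ ι}
    (hmax : IsMaxOn (fun t => |(colMatrix t).det|) (univ.pi fun _ => K) v)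
    (hv : ∀ j, v j ∈ K) (hdet : (colMatrix v).det ≠ 0) :
    K ⊆ toLpLin 2 2 (colMatrix v) '' {w | ∀ i, |w i| ≤ 1} := by
  intro q hq
  set M := colMatrix v
  refine ⟨WithLp.toLp 2 (M.det⁻¹ • M.cramer q.ofLp), fun j => ?_, ?_⟩
  · -- Cramer's rule: the `j`-th coordinate is a ratio of determinants, and `v` maximises `|det|`.
    have hcol : M.updateCol j q.ofLp = colMatrix (Function.update v j q) := by
      ext i l
      simp only [M, updateCol_apply, colMatrix, of_apply, Function.update_apply]
      split_ifs <;> simp_all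
    have hle := isMaxOn_iff.1 hmax (Function.update v j q) (Set.mem_univ_pi.2 fun l => by
      rcases eq_or_ne l j with rfl | hl
      · simpa using hq
      · simpa [hl] using hv l)
    simp only [← hcol, ← cramer_apply] at hle
    simp only [Pi.smul_apply, smul_eq_mul, abs_mul, abs_inv]
    rw [inv_mul_le_iff₀ (abs_pos.2 hdet), mul_one]
    exact hle
  · simp [toLpLin_apply, mulVec_cramer, smul_smul, inv_mul_cancel₀ hdet]

theorem continuous_abs_det_colMatrix :
    Continuous fun t : ι → EuclideanSpace ℝ ι => |(colMatrix t).det| := by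
  unfold colMatrix
  fun_prop

omit [Fintype ι] in
theorem colMatrix_smul_single (r : ℝ) :
    colMatrix (fun j => r • EuclideanSpace.single j (1 : ℝ)) = diagonal fun _ : ι => r := by
  ext i j
  by_cases hij : i = j <;> simp [colMatrix, hij, PiLp.single_apply]

theorem IsCompact.exists_isMaxOn_abs_det_colMatrix {K : Set (EuclideanSpace ℝ ι)}
    (hK : IsCompact K) {t : ι → EuclideanSpace ℝ ι} (ht : ∀ j, t j ∈ K)
    (htdet : (colMatrix t).det ≠ 0) :
    ∃ v, (∀ j, v j ∈ K) ∧ IsMaxOn (fun t => |(colMatrix t).det|) (univ.pi fun _ => K) v ∧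
      (colMatrix v).det ≠ 0 := by
  obtain ⟨v, hv, hmax⟩ := (isCompact_univ_pi fun _ => hK).exists_isMaxOn
    ⟨t, Set.mem_univ_pi.2 ht⟩ continuous_abs_det_colMatrix.continuousOn
  refine ⟨v, Set.mem_univ_pi.1 hv, hmax, fun h0 => htdet ?_⟩
  simpa [h0] using isMaxOn_iff.1 hmax t (Set.mem_univ_pi.2 ht)

theorem exists_isMaxOn_abs_det_colMatrix_sub {C : Set (EuclideanSpace ℝ ι)} (hC : IsCompact C)
    (hCi : (interior C).Nonempty) :
    ∃ v, (∀ j, v j ∈ C - C) ∧ IsMaxOn (fun t => |(colMatrix t).det|) (univ.pi fun _ => C - C) v ∧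
      (colMatrix v).det ≠ 0 := by
  obtain ⟨s, hs⟩ := hCi
  obtain ⟨ε, hε, hball⟩ := Metric.isOpen_iff.1 isOpen_interior s hs
  have hmem : ∀ j, (ε / 2) • EuclideanSpace.single j (1 : ℝ) ∈ C - C := fun j => by
    refine ⟨_, interior_subset (hball ?_), s, interior_subset hs, add_sub_cancel_left s _⟩
    rw [mem_ball_iff_norm, add_sub_cancel_left, norm_smul, PiLp.norm_single]
    simp [abs_of_pos hε, hε]
  have hK : IsCompact (C - C) := by simpa [sub_eq_add_neg] using hC.add hC.neg
  refine hK.exists_isMaxOn_abs_det_colMatrix hmem ?_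
  rw [colMatrix_smul_single, det_diagonal]
  exact Finset.prod_ne_zero_iff.2 fun _ _ => by positivity

theorem volume_le_abs_det_colMatrix_mul {C : Set (EuclideanSpace ℝ ι)} {v : ι → EuclideanSpace ℝ ι}
    (hC : C - C ⊆ toLpLin 2 2 (colMatrix v) '' {w | ∀ i, |w i| ≤ 1}) :
    volume C ≤ ENNReal.ofReal (|(colMatrix v).det| * 2 ^ Fintype.card ι) := by
  rcases C.eq_empty_or_nonempty with rfl | ⟨s, hs⟩
  · simp
  calc volume C ≤ volume ((· + -s) ⁻¹' (toLpLin 2 2 (colMatrix v) '' {w | ∀ i, |w i| ≤ 1})) :=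
        measure_mono fun c hc => hC ⟨c, hc, s, hs, (sub_eq_add_neg c s)⟩
    _ = _ := by
      rw [measure_preimage_add_right, volume_image_colMatrix_cube v zero_le_one, mul_one]

theorem IsCompact.exists_frame [Nonempty ι] {C : Set (EuclideanSpace ℝ ι)} (hC : IsCompact C)
    (hCv : Convex ℝ C) (hCi : (interior C).Nonempty) :
    ∃ v : ι → EuclideanSpace ℝ ι, (colMatrix v).det ≠ 0 ∧
      volume C ≤ ENNReal.ofReal (|(colMatrix v).det| * 2 ^ Fintype.card ι) ∧
      ∃ y ∈ C, ∀ i, y + (2 * Fintype.card ι : ℝ)⁻¹ • v i ∈ C ∧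
        y - (2 * Fintype.card ι : ℝ)⁻¹ • v i ∈ C := by
  obtain ⟨v, hv, hmax, hdet⟩ := exists_isMaxOn_abs_det_colMatrix_sub hC hCi
  exact ⟨v, hdet,
    volume_le_abs_det_colMatrix_mul (subset_image_cube_of_isMaxOn_abs_det hmax hv hdet),
    hCv.exists_add_smul_mem_and_sub_smul_mem hv⟩

end Frame

theorem Convex.addHaar_interior {V : Type*} [NormedAddCommGroup V] [NormedSpace ℝ V]
    [MeasurableSpace V] [BorelSpace V] [FiniteDimensional ℝ V] (μ : Measure V) [μ.IsAddHaarMeasure]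
    {s : Set V} (hs : Convex ℝ s) : μ (interior s) = μ (closure s) := by
  refine le_antisymm (measure_mono interior_subset_closure) ?_
  calc μ (closure s) ≤ μ (interior s) + μ (frontier s) := by
        rw [closure_eq_interior_union_frontier]
        exact measure_union_le _ _
    _ = μ (interior s) := by rw [hs.addHaar_frontier μ, add_zero]

theorem ENNReal.le_ofReal_sqrt_of_mul_le {a : ℝ≥0∞} {lam d B : ℝ} (hlam : 0 < lam) (hd : 0 < d)
    (h₁ : ENNReal.ofReal lam * a ≤ ENNReal.ofReal (B / d)) (h₂ : a ≤ ENNReal.ofReal d) :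
    a ≤ ENNReal.ofReal √(B / lam) := by
  obtain ⟨A, hA, rfl⟩ : ∃ A : ℝ, 0 ≤ A ∧ a = ENNReal.ofReal A :=
    ⟨a.toReal, ENNReal.toReal_nonneg,
      (ENNReal.ofReal_toReal (ne_top_of_le_ne_top ENNReal.ofReal_ne_top h₂)).symm⟩
  rw [ENNReal.ofReal_le_ofReal_iff hd.le] at h₂
  rw [← ENNReal.ofReal_mul hlam.le, ENNReal.ofReal_le_ofReal_iff'] at h₁
  rcases h₁ with h₁ | h₁
  · refine ENNReal.ofReal_le_ofReal (Real.le_sqrt_of_sq_le ?_)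
    rw [le_div_iff₀ hlam]
    rw [le_div_iff₀ hd] at h₁
    nlinarith [mul_nonneg (sub_nonneg.2 (mul_le_mul_of_nonneg_left h₂ hA)) hlam.le]
  · rw [ENNReal.ofReal_of_nonpos (by nlinarith)]
    exact zero_le

section Sections

variable {n : ℕ} {Ω : Set (E n)} {u : E n → ℝ} {x p : E n} {h : ℝ}

theorem convex_secn (hu : ConvexOn ℝ Ω u) : Convex ℝ (secn Ω u x p h) := by
  have hlin : ConvexOn ℝ Ω (u - ⇑(innerₛₗ ℝ p)) := hu.sub ((innerₛₗ ℝ p).concaveOn hu.1)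
  have hsecn : secn Ω u x p h = {y ∈ Ω | (u - ⇑(innerₛₗ ℝ p)) y < u x - ⟪p, x⟫ + h} := by
    ext y
    simp only [secn, mem_sep_iff, Pi.sub_apply, innerₛₗ_apply_apply, inner_sub_right]
    constructor <;> rintro ⟨hy, hlt⟩ <;> exact ⟨hy, by linarith⟩
  exact hsecn ▸ hlin.convex_lt _

theorem inner_sub_le_of_mem_closure_secn (hp : p ∈ subdiff Ω u x) {y q z : E n} (hy : y ∈ Ω)
    (hq : q ∈ subdiff Ω u y) (hz : z ∈ closure (secn Ω u x p h)) : ⟪q - p, z - y⟫ ≤ h := by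
  refine closure_minimal (fun w hw => ?_) (isClosed_le (f := fun w => ⟪q - p, w - y⟫)
    (continuous_const.inner (continuous_id.sub continuous_const)) continuous_const) hz
  have hpw : ⟪p, w - x⟫ = ⟪p, w - y⟫ + ⟪p, y - x⟫ := by
    rw [← inner_add_right, sub_add_sub_cancel]
  simp only [Set.mem_ofPred_eq, inner_sub_left]
  linarith [hq w hw.1, hp y hy, hw.2]

theorem abs_inner_sub_le_of_mem_closure_secn (hp : p ∈ subdiff Ω u x) {y q v : E n} (hy : y ∈ Ω)
    (hq : q ∈ subdiff Ω u y) {δ : ℝ} (hδ : 0 < δ) (hadd : y + δ • v ∈ closure (secn Ω u x p h))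
    (hsub : y - δ • v ∈ closure (secn Ω u x p h)) : |⟪v, q - p⟫| ≤ δ⁻¹ * h := by
  have hle := inner_sub_le_of_mem_closure_secn hp hy hq hadd
  have hge := inner_sub_le_of_mem_closure_secn hp hy hq hsub
  rw [add_sub_cancel_left, inner_smul_right, real_inner_comm] at hle
  rw [sub_sub_cancel_left, inner_neg_right, inner_smul_right, real_inner_comm] at hge
  refine abs_le.2 ⟨?_, ?_⟩
  · rwa [neg_le, le_inv_mul_iff₀ hδ, mul_neg]
  · rwa [le_inv_mul_iff₀ hδ]

theorem ofReal_mul_volume_closure_secn_le {lam : ℝ} (hu : ConvexOn ℝ Ω u)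
    (hMA : ∀ A : Set (E n), MeasurableSet A → A ⊆ Ω → ENNReal.ofReal lam * volume A ≤ MAm Ω u A)
    (hp : p ∈ subdiff Ω u x) {y : E n} {v : Fin n → E n} {ε : ℝ} (hε : 0 < ε)
    (hy : y ∈ closure (secn Ω u x p h)) (hyv : ∀ i, y + ε • v i ∈ closure (secn Ω u x p h) ∧
      y - ε • v i ∈ closure (secn Ω u x p h)) :
    ENNReal.ofReal lam * volume (closure (secn Ω u x p h)) ≤
      ENNReal.ofReal (2 ^ n) * volume {q | ∀ i, |⟪v i, q - p⟫| ≤ (ε / 2)⁻¹ * h} := by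
  set S := secn Ω u x p h
  have hS : Convex ℝ S := convex_secn hu
  set S' := AffineMap.homothety y (2⁻¹ : ℝ) '' interior S
  have hS'eq : ∀ y' ∈ S', ∃ s ∈ interior S, y' = (2⁻¹ : ℝ) • s + (2⁻¹ : ℝ) • y := by
    rintro _ ⟨s, hs, rfl⟩
    exact ⟨s, hs, by rw [AffineMap.homothety_apply, vsub_eq_sub, vadd_eq_add]; module⟩
  have hS'Ω : S' ⊆ Ω := fun y' hy' => by
    obtain ⟨s, hs, rfl⟩ := hS'eq y' hy'
    exact (interior_subset (hS.combo_interior_closure_mem_interior hs hy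
      (by norm_num) (by norm_num) (by norm_num))).1
  have hMAm : MAm Ω u S' ≤ volume {q | ∀ i, |⟪v i, q - p⟫| ≤ (ε / 2)⁻¹ * h} := by
    refine measure_mono (iUnion₂_subset fun y' hy' q hq i => ?_)
    obtain ⟨s, hs, rfl⟩ := hS'eq y' hy'
    have hs' := subset_closure (interior_subset hs)
    refine abs_inner_sub_le_of_mem_closure_secn hp (hS'Ω hy') hq (half_pos hε) ?_ ?_
    · convert hS.closure hs' (hyv i).1 (by norm_num : (0 : ℝ) ≤ 2⁻¹)
        (by norm_num : (0 : ℝ) ≤ 2⁻¹) (by norm_num) using 1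
      module
    · convert hS.closure hs' (hyv i).2 (by norm_num : (0 : ℝ) ≤ 2⁻¹)
        (by norm_num : (0 : ℝ) ≤ 2⁻¹) (by norm_num) using 1
      module
  have hvolS' : volume S' = ENNReal.ofReal ((2 ^ n)⁻¹) * volume (closure S) := by
    rw [Measure.addHaar_image_homothety, hS.addHaar_interior volume, finrank_euclideanSpace_fin,
      inv_pow, abs_of_pos (by positivity)]
  have hS'meas : MeasurableSet S' :=
    (AffineMap.homothety_isOpenMap y _ (by norm_num) _ isOpen_interior).measurableSet
  calc ENNReal.ofReal lam * volume (closure S)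
      = ENNReal.ofReal (2 ^ n) * (ENNReal.ofReal lam * volume S') := by
        rw [hvolS', mul_left_comm (ENNReal.ofReal lam), ← mul_assoc,
          ← ENNReal.ofReal_mul (by positivity), mul_inv_cancel₀ (by positivity),
          ENNReal.ofReal_one, one_mul]
    _ ≤ _ := by gcongr; exact (hMA S' hS'meas hS'Ω).trans hMAm

theorem volume_closure_secn_le (hn : 0 < n) {lam : ℝ} (hlam : 0 < lam) (hh : 0 < h)
    (hu : ConvexOn ℝ Ω u)
    (hMA : ∀ A : Set (E n), MeasurableSet A → A ⊆ Ω → ENNReal.ofReal lam * volume A ≤ MAm Ω u A)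
    (hp : p ∈ subdiff Ω u x) {v : Fin n → E n} (hdet : (colMatrix v).det ≠ 0)
    (hvol : volume (closure (secn Ω u x p h)) ≤ ENNReal.ofReal (|(colMatrix v).det| * 2 ^ n))
    {y : E n} (hy : y ∈ closure (secn Ω u x p h))
    (hyv : ∀ i, y + (2 * n : ℝ)⁻¹ • v i ∈ closure (secn Ω u x p h) ∧
      y - (2 * n : ℝ)⁻¹ • v i ∈ closure (secn Ω u x p h)) :
    volume (closure (secn Ω u x p h))
      ≤ ENNReal.ofReal (√((32 * n) ^ n / lam) * h ^ ((n : ℝ) / 2)) := by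
  have hn' : (0 : ℝ) < n := Nat.cast_pos.2 hn
  have hMA' := ofReal_mul_volume_closure_secn_le hu hMA hp (by positivity) hy hyv
  have h4 : ((2 * (n : ℝ))⁻¹ / 2)⁻¹ * h = 4 * n * h := by field_simp; ring
  rw [h4, volume_setOf_forall_abs_inner_sub_le hdet p (by positivity), Fintype.card_fin,
    ← ENNReal.ofReal_mul (by positivity)] at hMA'
  refine (ENNReal.le_ofReal_sqrt_of_mul_le (B := (32 * n * h) ^ n) hlam (by positivity)
    (hMA'.trans_eq ?_) hvol).trans_eq ?_
  · congr 1
    field_simp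
    rw [← pow_mul, mul_comm n 2, pow_mul, ← mul_pow]
    ring
  · congr 1
    rw [mul_pow, mul_div_right_comm, Real.sqrt_mul (by positivity), Real.sqrt_eq_rpow (h ^ n),
      ← Real.rpow_natCast h n, ← Real.rpow_mul hh.le]
    ring_nf

end Sections

/-- Volume growth of sections: if `Mu ≥ λ dx` then `|S_h(x)| ≤ C h^{n/2}`. -/
theorem section_volume_growth (n : ℕ) (hn : 1 ≤ n) (lam : ℝ) (hlam : 0 < lam) :
    ∃ C : ℝ, 0 < C ∧
      ∀ (Ω : Set (E n)) (u : E n → ℝ),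
        IsOpen Ω → Bornology.IsBounded Ω → Convex ℝ Ω → ConvexOn ℝ Ω u →
        (∀ A : Set (E n), MeasurableSet A → A ⊆ Ω →
          ENNReal.ofReal lam * volume A ≤ MAm Ω u A) →
        ∀ x ∈ Ω, ∀ p ∈ subdiff Ω u x, ∀ h : ℝ, 0 < h →
          volume (secn Ω u x p h) ≤ ENNReal.ofReal (C * h ^ ((n : ℝ) / 2)) := by
  have : Nonempty (Fin n) := ⟨⟨0, hn⟩⟩
  refine ⟨√((32 * n) ^ n / lam), by positivity, ?_⟩
  intro Ω u _ hΩ _ hu hMA x _ p hp h hh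
  set S := secn Ω u x p h
  have hS : Convex ℝ S := convex_secn hu
  refine (measure_mono subset_closure).trans ?_
  rcases (interior S).eq_empty_or_nonempty with hint | hint
  · rw [← hS.addHaar_interior volume, hint, measure_empty]
    exact zero_le
  obtain ⟨v, hdet, hvol, y, hy, hyv⟩ := (hΩ.subset fun _ hz => hz.1).isCompact_closure.exists_frame
    hS.closure (hint.mono (interior_mono subset_closure))
  simp only [Fintype.card_fin] at hvol hyv
  exact volume_closure_secn_le hn hlam hh hu hMA hp hdet hvol hy hyv
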